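/- Let S = R ⋉_n M be an n-trivial extension. Given a left R-module X together with R-linear maps α_i : M_i ⊗_R X → X for 1 ≤ i ≤ n such that (i) α_i ∘ (M_i ⊗ α_j) = 0 whenever i+j > n, and (ii) α_{i+j} ∘ (Φ̃_{i,j} ⊗ id_X) = α_i ∘ (id_{M_i} ⊗ α_j) whenever i+j ≤ n, then the formula (a, m_1, …, m_n)·x = a·x + ∑_{i=1}^n α_i(m_i ⊗ x) defines a unital left S-module structure on X. -/

import Mathlib

/-! Preamble: the `n`-trivial extension ring `R ⋉ₙ M` of a ring `R` by a family
`M = (M_i)_{1 ≤ i ≤ n}` of `R`-bimodules (a right `R`-action is encoded as a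
`Rᵐᵒᵖ`-module structure) with associative bilinear pre-products
`Φ_{i,j} : M_i × M_j → M_{i+j}`. -/

namespace NTriv

variable (R : Type) [Ring R] (M : ℕ → Type)
variable [∀ i, AddCommGroup (M i)] [∀ i, Module R (M i)] [∀ i, Module Rᵐᵒᵖ (M i)]
variable [∀ i, SMulCommClass R Rᵐᵒᵖ (M i)]

/-- The extended family of abelian groups: index `0` is `R` itself, index `i+1` is `M (i+1)`. -/
def ExtFam : ℕ → Type
  | 0 => R
  | i + 1 => M (i + 1)

instance : ∀ i, AddCommGroup (ExtFam R M i)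
  | 0 => inferInstanceAs (AddCommGroup R)
  | i + 1 => inferInstanceAs (AddCommGroup (M (i + 1)))

instance : ∀ i, Module R (ExtFam R M i)
  | 0 => inferInstanceAs (Module R R)
  | i + 1 => inferInstanceAs (Module R (M (i + 1)))

instance : ∀ i, Module Rᵐᵒᵖ (ExtFam R M i)
  | 0 => inferInstanceAs (Module Rᵐᵒᵖ R)
  | i + 1 => inferInstanceAs (Module Rᵐᵒᵖ (M (i + 1)))

/-- Transport along an equality of indices. -/
def ecast {i j : ℕ} (h : i = j) (x : ExtFam R M i) : ExtFam R M j := h ▸ x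

/-- Transport along an equality of indices, for the family `M`. -/
def mcast {i j : ℕ} (h : i = j) (x : M i) : M j := h ▸ x

/-- Identification `ExtFam R M 0 = R`. -/
def toR (x : ExtFam R M 0) : R := x

/-- Identification `ExtFam R M (i+1) = M (i+1)`. -/
def toM {i : ℕ} (x : ExtFam R M (i + 1)) : M (i + 1) := x

/-- Identification `M (i+1) = ExtFam R M (i+1)`. -/
def ofM {i : ℕ} (x : M (i + 1)) : ExtFam R M (i + 1) := x

/-- The product on the extended family induced by the pre-products `Φ`:
at index `0` it is the multiplication of `R`, and mixed products with index `0`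
are given by the left and right `R`-module structures. -/
def extProd (Φ : ∀ i j, M i → M j → M (i + j)) :
    ∀ i j, ExtFam R M i → ExtFam R M j → ExtFam R M (i + j)
  | 0, 0, r, s => toR R M r * toR R M s
  | 0, j + 1, r, b => ofM R M (mcast (M := M) (by show j + 1 = 0 + j + 1; omega) (toR R M r • toM R M b))
  | i + 1, 0, a, r => ofM R M (MulOpposite.op (toR R M r) • toM R M a)
  | i + 1, j + 1, a, b => Φ (i + 1) (j + 1) (toM R M a) (toM R M b)

/-- The underlying additive group `R ⊕ M₁ ⊕ ⋯ ⊕ M_n` of the `n`-trivial extension. -/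
def Car (n : ℕ) := ∀ k : Fin (n + 1), ExtFam R M k

instance (n : ℕ) : AddCommGroup (Car R M n) := inferInstanceAs (AddCommGroup (∀ k : Fin (n+1), ExtFam R M k))

variable (n : ℕ)

/-- Extension of an element of the carrier to a function on all of `ℕ`, by zero. -/
def pad (x : Car R M n) (i : ℕ) : ExtFam R M i :=
  if h : i < n + 1 then x ⟨i, h⟩ else 0

/-- The multiplication of the `n`-trivial extension:
`((m_i)ᵢ ⬝ (m'_j)_j)_k = ∑_{i+j=k} m_i m'_j`. -/
def trivMul (Φ : ∀ i j, M i → M j → M (i + j)) (x y : Car R M n) : Car R M n :=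
  fun k => ∑ i ∈ Finset.range (n + 1),
    if h : i ≤ (k : ℕ) then
      ecast R M (by omega) (extProd R M Φ i ((k : ℕ) - i) (pad R M n x i) (pad R M n y ((k : ℕ) - i)))
    else 0

/-- `(1,0,…,0)` as a dependent function on `ℕ`. -/
def oneN : ∀ i : ℕ, ExtFam R M i
  | 0 => (1 : R)
  | _ + 1 => 0

/-- The identity element `(1,0,…,0)` of the `n`-trivial extension. -/
def trivOne : Car R M n := fun k => oneN R M k

end NTriv

namespace NTriv

variable (R : Type) [Ring R] (M : ℕ → Type)
variable [∀ i, AddCommGroup (M i)] [∀ i, Module R (M i)] [∀ i, Module Rᵐᵒᵖ (M i)]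
variable [∀ i, SMulCommClass R Rᵐᵒᵖ (M i)]
variable (n : ℕ)

/-- The action `(a, m₁, …, m_n) ⬝ x = a ⬝ x + ∑ᵢ αᵢ(mᵢ ⊗ x)` of the `n`-trivial extension on an
`R`-module `X` equipped with maps `αᵢ : Mᵢ ⊗ X → X` (given as `R`-balanced bilinear maps
`αᵢ : Mᵢ → X → X`, which is the same data as `R`-linear maps on the tensor product). -/
def trivSMul (X : Type) [AddCommGroup X] [Module R X]
    (α : ∀ i, M i → X → X) (s : Car R M n) (x : X) : X :=
  toR R M (s ⟨0, Nat.succ_pos n⟩) • x +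
    ∑ i ∈ Finset.range n, α (i + 1) (toM R M (pad R M n s (i + 1))) x

/-! Write `s • x = ∑_{k ≤ n} s_k • x`, where a homogeneous `s_k` acts through `α_k` (and `s_0 ∈ R`
through the module structure of `X`). Balancedness of the `αᵢ` and condition (ii) say that a
product of homogeneous elements of total degree `≤ n` acts as the composite of their actions;
condition (i) says that composites of total degree `> n` act by zero. So both `(s t) • x` and
`s • (t • x)` equal `∑_{i, j ≤ n} s_i • (t_j • x)`. -/

theorem _root_.Finset.sum_range_diag_eq_sum_range_sum_range {β : Type*} [AddCommMonoid β] (n : ℕ)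
    (F : ℕ → ℕ → β) (hF : ∀ i j, i ≤ n → j ≤ n → n < i + j → F i j = 0) :
    ∑ k ∈ Finset.range (n + 1), ∑ i ∈ Finset.range (k + 1), F i (k - i) =
      ∑ i ∈ Finset.range (n + 1), ∑ j ∈ Finset.range (n + 1), F i j := by
  rw [Finset.sum_range_diag_flip]
  refine Finset.sum_congr rfl fun i hi => Finset.sum_subset ?_ fun j hj hj' => hF i j ?_ ?_ ?_
  all_goals simp only [Finset.mem_range, Finset.range_subset_range] at *
  all_goals omega

section ComponentSMul

variable {R : Type} [Ring R] {M : ℕ → Type}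
variable {X : Type} [AddCommGroup X] [Module R X] {α : ∀ i, M i → X → X}

def componentSMul (α : ∀ i, M i → X → X) : ∀ i, ExtFam R M i → X → X
  | 0, r, x => toR R M r • x
  | i + 1, m, x => α (i + 1) (toM R M m) x

theorem componentSMul_ecast {i j : ℕ} (h : i = j) (e : ExtFam R M i) (x : X) :
    componentSMul α j (ecast R M h e) x = componentSMul α i e x := by
  subst h; rfl

theorem componentSMul_add_right
    (αadd_right : ∀ i (m : M i) (x x' : X), α i m (x + x') = α i m x + α i m x')
    (i : ℕ) (e : ExtFam R M i) (x y : X) :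
    componentSMul α i e (x + y) = componentSMul α i e x + componentSMul α i e y := by
  cases i with
  | zero => exact smul_add _ _ _
  | succ i => exact αadd_right _ _ _ _

theorem componentSMul_sum_right
    (αadd_right : ∀ i (m : M i) (x x' : X), α i m (x + x') = α i m x + α i m x')
    {ι : Type*} (s : Finset ι) (i : ℕ) (e : ExtFam R M i) (f : ι → X) :
    componentSMul α i e (∑ j ∈ s, f j) = ∑ j ∈ s, componentSMul α i e (f j) :=
  map_sum (AddMonoidHom.mk' (componentSMul α i e) (componentSMul_add_right αadd_right i e)) f s

theorem componentSMul_componentSMul_eq_zero {n : ℕ}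
    (hcond1 : ∀ i j, 1 ≤ i → i ≤ n → 1 ≤ j → j ≤ n → n < i + j →
      ∀ (m : M i) (m' : M j) (x : X), α i m (α j m' x) = 0)
    {i j : ℕ} (hi : i ≤ n) (hj : j ≤ n) (hij : n < i + j)
    (e : ExtFam R M i) (f : ExtFam R M j) (x : X) :
    componentSMul α i e (componentSMul α j f x) = 0 := by
  obtain ⟨i, rfl⟩ : ∃ i', i = i' + 1 := Nat.exists_eq_succ_of_ne_zero (by omega)
  obtain ⟨j, rfl⟩ : ∃ j', j = j' + 1 := Nat.exists_eq_succ_of_ne_zero (by omega)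
  exact hcond1 _ _ (by omega) hi (by omega) hj hij _ _ _

variable [∀ i, AddCommGroup (M i)]

theorem componentSMul_add_left
    (αadd_left : ∀ i (m m' : M i) (x : X), α i (m + m') x = α i m x + α i m' x)
    (i : ℕ) (e e' : ExtFam R M i) (x : X) :
    componentSMul α i (e + e') x = componentSMul α i e x + componentSMul α i e' x := by
  cases i with
  | zero => exact add_smul _ _ _
  | succ i => exact αadd_left _ _ _ _

theorem componentSMul_zero_left
    (αadd_left : ∀ i (m m' : M i) (x : X), α i (m + m') x = α i m x + α i m' x)
    (i : ℕ) (x : X) : componentSMul α i (0 : ExtFam R M i) x = 0 :=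
  (AddMonoidHom.mk' (componentSMul α i · x) (componentSMul_add_left αadd_left i · · x)).map_zero

theorem componentSMul_sum_left
    (αadd_left : ∀ i (m m' : M i) (x : X), α i (m + m') x = α i m x + α i m' x)
    {ι : Type*} (s : Finset ι) (i : ℕ) (f : ι → ExtFam R M i) (x : X) :
    componentSMul α i (∑ j ∈ s, f j) x = ∑ j ∈ s, componentSMul α i (f j) x :=
  map_sum (AddMonoidHom.mk' (componentSMul α i · x) (componentSMul_add_left αadd_left i · · x)) f s

variable [∀ i, Module R (M i)] [∀ i, Module Rᵐᵒᵖ (M i)]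

theorem componentSMul_extProd {n : ℕ} (Φ : ∀ i j, M i → M j → M (i + j))
    (αsmul : ∀ i (r : R) (m : M i) (x : X), α i (r • m) x = r • α i m x)
    (αbalanced : ∀ i (r : R) (m : M i) (x : X),
      α i (MulOpposite.op r • m) x = α i m (r • x))
    (hcond2 : ∀ i j, 1 ≤ i → 1 ≤ j → i + j ≤ n →
      ∀ (m : M i) (m' : M j) (x : X), α (i + j) (Φ i j m m') x = α i m (α j m' x))
    (i j : ℕ) (hij : i + j ≤ n) (e : ExtFam R M i) (f : ExtFam R M j) (x : X) :
    componentSMul α (i + j) (extProd R M Φ i j e f) x =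
      componentSMul α i e (componentSMul α j f x) := by
  match i, j with
  | 0, 0 => exact mul_smul _ _ _
  | 0, j + 1 =>
    have α_mcast : ∀ {k} (h : j + 1 = k) (m : M (j + 1)), α k (mcast (M := M) h m) x = α _ m x := by
      rintro _ rfl _; rfl
    exact (α_mcast _ _).trans (αsmul _ _ _ _)
  | i + 1, 0 => exact αbalanced _ _ _ _
  | i + 1, j + 1 => exact hcond2 _ _ (by omega) (by omega) hij _ _ _

end ComponentSMul

section TrivSMul

variable {R : Type} [Ring R] {M : ℕ → Type} [∀ i, AddCommGroup (M i)] {n : ℕ}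
variable {X : Type} [AddCommGroup X] [Module R X] {α : ∀ i, M i → X → X}

theorem trivSMul_eq_sum (s : Car R M n) (x : X) :
    trivSMul R M n X α s x = ∑ k ∈ Finset.range (n + 1), componentSMul α k (pad R M n s k) x := by
  rw [Finset.sum_range_succ', add_comm]
  rfl

theorem pad_add (s t : Car R M n) (i : ℕ) :
    pad R M n (s + t) i = pad R M n s i + pad R M n t i := by
  unfold pad
  split_ifs
  · rfl
  · rw [add_zero]

theorem trivSMul_trivOne
    (αadd_left : ∀ i (m m' : M i) (x : X), α i (m + m') x = α i m x + α i m' x) (x : X) :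
    trivSMul R M n X α (trivOne R M n) x = x := by
  have hpad : ∀ i, pad R M n (trivOne R M n) (i + 1) = 0 := fun i => by
    unfold pad; split_ifs <;> rfl
  rw [trivSMul_eq_sum, Finset.sum_range_succ', Finset.sum_eq_zero fun i _ => by
    rw [hpad]; exact componentSMul_zero_left αadd_left (i + 1) x, zero_add]
  exact one_smul R x

theorem trivSMul_add_left
    (αadd_left : ∀ i (m m' : M i) (x : X), α i (m + m') x = α i m x + α i m' x)
    (s t : Car R M n) (x : X) :
    trivSMul R M n X α (s + t) x = trivSMul R M n X α s x + trivSMul R M n X α t x := by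
  simp only [trivSMul_eq_sum, pad_add, componentSMul_add_left αadd_left, Finset.sum_add_distrib]

theorem trivSMul_add_right
    (αadd_right : ∀ i (m : M i) (x x' : X), α i m (x + x') = α i m x + α i m x')
    (s : Car R M n) (x y : X) :
    trivSMul R M n X α s (x + y) = trivSMul R M n X α s x + trivSMul R M n X α s y := by
  simp only [trivSMul_eq_sum, componentSMul_add_right αadd_right, Finset.sum_add_distrib]

variable [∀ i, Module R (M i)] [∀ i, Module Rᵐᵒᵖ (M i)]

theorem componentSMul_pad_trivMul (Φ : ∀ i j, M i → M j → M (i + j))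
    (αadd_left : ∀ i (m m' : M i) (x : X), α i (m + m') x = α i m x + α i m' x)
    (αsmul : ∀ i (r : R) (m : M i) (x : X), α i (r • m) x = r • α i m x)
    (αbalanced : ∀ i (r : R) (m : M i) (x : X),
      α i (MulOpposite.op r • m) x = α i m (r • x))
    (hcond2 : ∀ i j, 1 ≤ i → 1 ≤ j → i + j ≤ n →
      ∀ (m : M i) (m' : M j) (x : X), α (i + j) (Φ i j m m') x = α i m (α j m' x))
    (s t : Car R M n) {k : ℕ} (hk : k ≤ n) (x : X) :
    componentSMul α k (pad R M n (trivMul R M n Φ s t) k) x =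
      ∑ i ∈ Finset.range (k + 1),
        componentSMul α i (pad R M n s i) (componentSMul α (k - i) (pad R M n t (k - i)) x) := by
  rw [pad, dif_pos (by omega), trivMul]
  simp only [Fin.val_mk]
  rw [componentSMul_sum_left αadd_left,
    ← Finset.sum_subset (Finset.range_subset_range.2 (by omega : k + 1 ≤ n + 1))]
  · refine Finset.sum_congr rfl fun i hi => ?_
    rw [Finset.mem_range] at hi
    rw [dif_pos (by omega), componentSMul_ecast,
      componentSMul_extProd Φ αsmul αbalanced hcond2 _ _ (by omega)]
  · intro i _ hi
    rw [dif_neg (by simp only [Finset.mem_range] at hi; omega), componentSMul_zero_left αadd_left]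

theorem trivSMul_trivMul (Φ : ∀ i j, M i → M j → M (i + j))
    (αadd_left : ∀ i (m m' : M i) (x : X), α i (m + m') x = α i m x + α i m' x)
    (αadd_right : ∀ i (m : M i) (x x' : X), α i m (x + x') = α i m x + α i m x')
    (αsmul : ∀ i (r : R) (m : M i) (x : X), α i (r • m) x = r • α i m x)
    (αbalanced : ∀ i (r : R) (m : M i) (x : X),
      α i (MulOpposite.op r • m) x = α i m (r • x))
    (hcond1 : ∀ i j, 1 ≤ i → i ≤ n → 1 ≤ j → j ≤ n → n < i + j →
      ∀ (m : M i) (m' : M j) (x : X), α i m (α j m' x) = 0)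
    (hcond2 : ∀ i j, 1 ≤ i → 1 ≤ j → i + j ≤ n →
      ∀ (m : M i) (m' : M j) (x : X), α (i + j) (Φ i j m m') x = α i m (α j m' x))
    (s t : Car R M n) (x : X) :
    trivSMul R M n X α (trivMul R M n Φ s t) x =
      trivSMul R M n X α s (trivSMul R M n X α t x) := by
  rw [trivSMul_eq_sum, Finset.sum_congr rfl fun k hk =>
      componentSMul_pad_trivMul Φ αadd_left αsmul αbalanced hcond2 s t
        (Nat.lt_succ_iff.mp (Finset.mem_range.mp hk)) x,
    Finset.sum_range_diag_eq_sum_range_sum_range n _ fun i j hi hj hij =>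
      componentSMul_componentSMul_eq_zero hcond1 hi hj hij _ _ x,
    trivSMul_eq_sum, trivSMul_eq_sum]
  simp only [componentSMul_sum_right αadd_right]

end TrivSMul

theorem statement_2
    (Φ : ∀ i j, M i → M j → M (i + j))
    (X : Type) [AddCommGroup X] [Module R X]
    (α : ∀ i, M i → X → X)
    -- each `αᵢ` corresponds to an `R`-linear map `Mᵢ ⊗_R X → X`:
    (αadd_left : ∀ i (m m' : M i) (x : X), α i (m + m') x = α i m x + α i m' x)
    (αadd_right : ∀ i (m : M i) (x x' : X), α i m (x + x') = α i m x + α i m x')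
    (αsmul : ∀ i (r : R) (m : M i) (x : X), α i (r • m) x = r • α i m x)
    (αbalanced : ∀ i (r : R) (m : M i) (x : X),
      α i (MulOpposite.op r • m) x = α i m (r • x))
    -- condition (i):
    (hcond1 : ∀ i j, 1 ≤ i → i ≤ n → 1 ≤ j → j ≤ n → n < i + j →
      ∀ (m : M i) (m' : M j) (x : X), α i m (α j m' x) = 0)
    -- condition (ii):
    (hcond2 : ∀ i j, 1 ≤ i → 1 ≤ j → i + j ≤ n →
      ∀ (m : M i) (m' : M j) (x : X), α (i + j) (Φ i j m m') x = α i m (α j m' x)) :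
    (∀ x : X, trivSMul R M n X α (trivOne R M n) x = x) ∧
    (∀ (s t : Car R M n) (x : X),
      trivSMul R M n X α (trivMul R M n Φ s t) x = trivSMul R M n X α s (trivSMul R M n X α t x)) ∧
    (∀ (s t : Car R M n) (x : X),
      trivSMul R M n X α (s + t) x = trivSMul R M n X α s x + trivSMul R M n X α t x) ∧
    (∀ (s : Car R M n) (x y : X),
      trivSMul R M n X α s (x + y) = trivSMul R M n X α s x + trivSMul R M n X α s y) :=
  ⟨trivSMul_trivOne αadd_left,
    trivSMul_trivMul Φ αadd_left αadd_right αsmul αbalanced hcond1 hcond2,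
    trivSMul_add_left αadd_left, trivSMul_add_right αadd_right⟩

end NTriv
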